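/- arXiv:2509.23277 — 5 statements merged into one kernel-verified Lean document; each statement's English description precedes it below -/
import Mathlib

section
/- Let X be a locally compact Hausdorff topological space and let f : X → ℝ be continuous with compact support. Then the smallest subalgebra of the algebra C_c(X) of compactly supported continuous real-valued functions on X that contains f and is closed with respect to the uniform norm equals the set {φ ∘ f | φ : ℝ → ℝ continuous, φ(0) = 0}. -/
/-- `f : X → ℝ` is a compactly supported continuous function. -/
def IsCc {X : Type*} [TopologicalSpace X] (f : X → ℝ) : Prop :=
  Continuous f ∧ HasCompactSupport f

/-- The uniform norm of a function `f : X → ℝ`. -/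
noncomputable def unif {X : Type*} (f : X → ℝ) : ℝ := ⨆ x, |f x|

/-- `C(f) = {φ ∘ f | φ : ℝ → ℝ continuous, φ 0 = 0}`. -/
def Cf {X : Type*} (f : X → ℝ) : Set (X → ℝ) :=
  {g | ∃ φ : ℝ → ℝ, Continuous φ ∧ φ 0 = 0 ∧ g = φ ∘ f}

/-!
`Cf f` is a subalgebra of `C_c(X)` containing `f`, and it is uniformly closed: a uniform limit `g`
of functions `φₙ ∘ f` is constant on the fibres of `f` and vanishes where `f` does, so `g = ψ ∘ f`
for some `ψ` on the compact set `{0} ∪ f(X)`; there `ψ` is the uniform limit of the `φₙ`, hence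
continuous, and Tietze extends it to `ℝ`. Conversely, by Weierstrass on an interval containing
`f(X)` and `0`, every `φ ∘ f` is a uniform limit of `p ∘ f` with `p` a polynomial without constant
term, and these lie in every subalgebra containing `f`.
-/

open Polynomial Set Function

universe u v

theorem NonUnitalSubalgebra.pow_succ_mem {R A : Type*} [CommSemiring R] [Semiring A] [Algebra R A]
    (S : NonUnitalSubalgebra R A) {a : A} (ha : a ∈ S) (n : ℕ) : a ^ (n + 1) ∈ S := by
  induction n with
  | zero => simpa using ha
  | succ n ih => simpa [pow_succ] using S.mul_mem ih ha

theorem NonUnitalSubalgebra.aeval_mem {R A : Type*} [CommSemiring R] [Semiring A] [Algebra R A]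
    (S : NonUnitalSubalgebra R A) {a : A} (ha : a ∈ S) {p : R[X]} (hp : p.coeff 0 = 0) :
    aeval a p ∈ S := by
  rw [aeval_eq_sum_range, Finset.sum_range_succ', hp, zero_smul, add_zero]
  exact S.sum_mem fun i _ => S.smul_mem _ (S.pow_succ_mem ha i)

theorem exists_polynomial_coeff_zero_near {a b : ℝ} (h0 : (0 : ℝ) ∈ Icc a b) {φ : ℝ → ℝ}
    (hφ : ContinuousOn φ (Icc a b)) (hφ0 : φ 0 = 0) {ε : ℝ} (hε : 0 < ε) :
    ∃ p : ℝ[X], p.coeff 0 = 0 ∧ ∀ t ∈ Icc a b, |p.eval t - φ t| < ε := by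
  obtain ⟨p, hp⟩ := exists_polynomial_near_of_continuousOn a b φ hφ (ε / 2) (half_pos hε)
  have hp0 : |p.eval 0| < ε / 2 := by simpa [hφ0] using hp 0 h0
  refine ⟨p - C (p.eval 0), by simp [coeff_zero_eq_eval_zero], fun t ht => ?_⟩
  calc
    _ = |(p.eval t - φ t) - p.eval 0| := by rw [eval_sub, eval_C, sub_right_comm]
    _ ≤ |p.eval t - φ t| + |p.eval 0| := abs_sub _ _
    _ < ε := by linarith [hp t ht]

theorem IsClosed.exists_continuous_eqOn {X : Type u} {Y : Type v} [TopologicalSpace X]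
    [NormalSpace X] [TopologicalSpace Y] [TietzeExtension.{u, v} Y] {s : Set X} (hs : IsClosed s)
    {ψ : X → Y} (hψ : ContinuousOn ψ s) : ∃ G : X → Y, Continuous G ∧ EqOn G ψ s := by
  obtain ⟨G, hG⟩ := ContinuousMap.exists_restrict_eq hs ⟨s.domRestrict ψ, hψ.domRestrict⟩
  exact ⟨G, G.continuous, fun t ht => congr($hG ⟨t, ht⟩)⟩

section IsCc

variable {X : Type*} [TopologicalSpace X] {f g : X → ℝ}

theorem IsCc.sub (hf : IsCc f) (hg : IsCc g) : IsCc (f - g) :=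
  ⟨hf.1.sub hg.1, hf.2.sub hg.2⟩

theorem IsCc.comp_left (hf : IsCc f) {φ : ℝ → ℝ} (hφ : Continuous φ) (hφ0 : φ 0 = 0) :
    IsCc (φ ∘ f) :=
  ⟨hφ.comp hf.1, hf.2.comp_left hφ0⟩

theorem IsCc.abs_le_unif (hf : IsCc f) (x : X) : |f x| ≤ unif f :=
  le_ciSup ((hf.2.comp_left abs_zero).isCompact_range hf.1.abs).bddAbove x

theorem IsCc.isClosed_insert_zero_range (hf : IsCc f) : IsClosed (insert 0 (range f)) :=
  ((hf.2.isCompact_range hf.1).insert 0).isClosed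

theorem Cf_subset_isCc (hf : IsCc f) : Cf f ⊆ {g | IsCc g} := by
  rintro _ ⟨φ, hφ, hφ0, rfl⟩
  exact hf.comp_left hφ hφ0

end IsCc

def Cf.nonUnitalSubalgebra {X : Type*} (f : X → ℝ) : NonUnitalSubalgebra ℝ (X → ℝ) where
  carrier := Cf f
  zero_mem' := ⟨0, continuous_const, rfl, rfl⟩
  add_mem' := by
    rintro _ _ ⟨φ, hφ, hφ0, rfl⟩ ⟨χ, hχ, hχ0, rfl⟩
    exact ⟨φ + χ, hφ.add hχ, by simp [hφ0, hχ0], rfl⟩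
  mul_mem' := by
    rintro _ _ ⟨φ, hφ, hφ0, rfl⟩ ⟨χ, hχ, -, rfl⟩
    exact ⟨φ * χ, hφ.mul hχ, by simp [hφ0], rfl⟩
  smul_mem' := by
    rintro c _ ⟨φ, hφ, hφ0, rfl⟩
    exact ⟨c • φ, hφ.const_smul c, by simp [hφ0], rfl⟩

section UniformClosure

variable {X : Type*} {f g : X → ℝ}

theorem factorsThrough_of_forall_approx (happ : ∀ ε > 0, ∃ h ∈ Cf f, ∀ x, |g x - h x| < ε) :
    g.FactorsThrough f := by
  intro x y hxy
  refine eq_of_forall_dist_le fun ε hε => ?_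
  obtain ⟨_, ⟨φ, -, -, rfl⟩, hφ⟩ := happ (ε / 2) (half_pos hε)
  have hx : dist (g x) (φ (f y)) < ε / 2 := by simpa [hxy, Real.dist_eq] using hφ x
  have hy : dist (g y) (φ (f y)) < ε / 2 := by simpa [Real.dist_eq] using hφ y
  linarith [dist_triangle_right (g x) (g y) (φ (f y))]

theorem eq_zero_of_forall_approx (happ : ∀ ε > 0, ∃ h ∈ Cf f, ∀ x, |g x - h x| < ε) {x : X}
    (hx : f x = 0) : g x = 0 := by
  refine eq_of_forall_dist_le fun ε hε => ?_
  obtain ⟨_, ⟨φ, -, hφ0, rfl⟩, hφ⟩ := happ ε hε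
  simpa [Real.dist_eq, hx, hφ0] using (hφ x).le

theorem mem_Cf_of_forall_approx (hK : IsClosed (insert 0 (range f)))
    (happ : ∀ ε > 0, ∃ h ∈ Cf f, ∀ x, |g x - h x| < ε) : g ∈ Cf f := by
  set ψ := extend f g 0
  have hψf : ∀ x, ψ (f x) = g x := (factorsThrough_of_forall_approx happ).extend_apply 0
  have hψ0 : ψ 0 = 0 := by
    by_cases h : ∃ x, f x = 0
    · obtain ⟨x, hx⟩ := h
      simpa [hx, eq_zero_of_forall_approx happ hx] using hψf x
    · exact extend_apply' g (0 : ℝ → ℝ) 0 h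
  have hψ : ContinuousOn ψ (insert 0 (range f)) := by
    refine continuousOn_of_uniform_approx_of_continuousOn fun u hu => ?_
    obtain ⟨ε, hε, hεu⟩ := Metric.mem_uniformity_dist.mp hu
    obtain ⟨_, ⟨φ, hφ, hφ0, rfl⟩, hφε⟩ := happ ε hε
    refine ⟨φ, hφ.continuousOn, ?_⟩
    rintro _ (rfl | ⟨x, rfl⟩)
    · simpa [hψ0, hφ0] using refl_mem_uniformity hu
    · exact hεu (by simpa [hψf, Real.dist_eq] using hφε x)
  obtain ⟨G, hG, hGψ⟩ := hK.exists_continuous_eqOn hψ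
  refine ⟨G, hG, by rw [hGψ (mem_insert 0 _), hψ0], funext fun x => ?_⟩
  rw [comp_apply, hGψ (mem_insert_of_mem 0 ⟨x, rfl⟩), hψf]

end UniformClosure

section Weierstrass

variable {X : Type*} [TopologicalSpace X] {f : X → ℝ}

theorem IsCc.exists_aeval_unif_sub_lt (hf : IsCc f) {φ : ℝ → ℝ} (hφ : Continuous φ)
    (hφ0 : φ 0 = 0) {ε : ℝ} (hε : 0 < ε) :
    ∃ p : ℝ[X], p.coeff 0 = 0 ∧ unif (φ ∘ f - aeval f p) < ε := by
  set M := unif f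
  have hM : 0 ≤ M := Real.iSup_nonneg fun x => abs_nonneg (f x)
  have hfM : ∀ x, f x ∈ Icc (-M) M := fun x => abs_le.mp (hf.abs_le_unif x)
  obtain ⟨p, hp0, hp⟩ := exists_polynomial_coeff_zero_near ⟨neg_nonpos.mpr hM, hM⟩
    hφ.continuousOn hφ0 (half_pos hε)
  refine ⟨p, hp0, (Real.iSup_le (fun x => ?_) (half_pos hε).le).trans_lt (half_lt_self hε)⟩
  simpa [abs_sub_comm] using (hp _ (hfM x)).le

theorem IsCc.comp_mem {A : NonUnitalSubalgebra ℝ (X → ℝ)} (hf : IsCc f) (hfA : f ∈ A)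
    (hA : ∀ g : X → ℝ, IsCc g → (∀ ε > 0, ∃ h ∈ A, unif (g - h) < ε) → g ∈ A)
    {φ : ℝ → ℝ} (hφ : Continuous φ) (hφ0 : φ 0 = 0) : φ ∘ f ∈ A :=
  hA _ (hf.comp_left hφ hφ0) fun _ hε =>
    let ⟨p, hp0, hp⟩ := hf.exists_aeval_unif_sub_lt hφ hφ0 hε
    ⟨aeval f p, A.aeval_mem hfA hp0, hp⟩

end Weierstrass

theorem smallest_closed_subalgebra_eq_Cf_general
    {X : Type*} [TopologicalSpace X]
    (f : X → ℝ) (hf : IsCc f) :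
    ⋂₀ {S : Set (X → ℝ) |
        S ⊆ {g | IsCc g} ∧
        f ∈ S ∧
        (∀ g ∈ S, ∀ h ∈ S, g + h ∈ S) ∧
        (∀ (c : ℝ), ∀ g ∈ S, c • g ∈ S) ∧
        (∀ g ∈ S, ∀ h ∈ S, g * h ∈ S) ∧
        (∀ g : X → ℝ, IsCc g → (∀ ε > 0, ∃ h ∈ S, unif (g - h) < ε) → g ∈ S)}
      = Cf f := by
  let C := Cf.nonUnitalSubalgebra f
  refine Subset.antisymm (sInter_subset_of_mem ⟨Cf_subset_isCc hf, ⟨id, continuous_id, rfl, rfl⟩,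
    fun g hg h hh => C.add_mem hg hh, fun c g hg => C.smul_mem c hg,
    fun g hg h hh => C.mul_mem hg hh, fun g hg happ => ?_⟩) ?_
  · refine mem_Cf_of_forall_approx hf.isClosed_insert_zero_range fun ε hε => ?_
    obtain ⟨h, hh, hgh⟩ := happ ε hε
    exact ⟨h, hh, fun x => ((hg.sub (Cf_subset_isCc hf hh)).abs_le_unif x).trans_lt hgh⟩
  · rintro _ ⟨φ, hφ, hφ0, rfl⟩ S ⟨-, hfS, hadd, hsmul, hmul, hclosed⟩
    let A : NonUnitalSubalgebra ℝ (X → ℝ) :=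
      { carrier := S
        add_mem' := fun hg hh => hadd _ hg _ hh
        zero_mem' := by simpa using hsmul 0 f hfS
        mul_mem' := fun hg hh => hmul _ hg _ hh
        smul_mem' := hsmul }
    exact hf.comp_mem (A := A) hfS hclosed hφ hφ0

/-- The smallest subalgebra of `C_c(X)` containing `f` which is closed with respect to
the uniform norm equals `C(f) = {φ ∘ f | φ continuous, φ 0 = 0}`. -/
theorem smallest_closed_subalgebra_eq_Cf
    {X : Type*} [TopologicalSpace X] [LocallyCompactSpace X] [T2Space X]
    (f : X → ℝ) (hf : IsCc f) :
    ⋂₀ {S : Set (X → ℝ) |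
        S ⊆ {g | IsCc g} ∧
        f ∈ S ∧
        (∀ g ∈ S, ∀ h ∈ S, g + h ∈ S) ∧
        (∀ (c : ℝ), ∀ g ∈ S, c • g ∈ S) ∧
        (∀ g ∈ S, ∀ h ∈ S, g * h ∈ S) ∧
        (∀ g : X → ℝ, IsCc g → (∀ ε > 0, ∃ h ∈ S, unif (g - h) < ε) → g ∈ S)}
      = Cf f :=
  smallest_closed_subalgebra_eq_Cf_general f hf
end

section
/- Let X be a locally compact Hausdorff topological space. Then the set QI₁(X) of all 1-Lipschitz quasi-integrals on X is compact in the topology of pointwise convergence, i.e., it is a compact subset of the space of all functions C_c(X) → ℝ equipped with the product topology. -/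
/-- The space `C_c(X)` of compactly supported continuous real-valued functions on `X`. -/
def Ccs (X : Type*) [TopologicalSpace X] : Type _ :=
  {f : X → ℝ // IsCc f}

/-- `QI₁(X)`: the set of `1`-Lipschitz quasi-integrals on `X`, i.e. functionals
`η : C_c(X) → ℝ` which are positive, linear on each `C(f)`, and `1`-Lipschitz with
respect to the uniform norm, viewed inside the product space `ℝ^{C_c(X)}`. -/
def QI1 (X : Type*) [TopologicalSpace X] : Set (Ccs X → ℝ) :=
  {η | (∀ f : Ccs X, (∀ x, 0 ≤ f.1 x) → 0 ≤ η f) ∧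
       (∀ f g h s : Ccs X, g.1 ∈ Cf f.1 → h.1 ∈ Cf f.1 → s.1 = g.1 + h.1 →
         η s = η g + η h) ∧
       (∀ (c : ℝ) (f g s : Ccs X), g.1 ∈ Cf f.1 → s.1 = c • g.1 →
         η s = c * η g) ∧
       (∀ f g : Ccs X, |η f - η g| ≤ unif (f.1 - g.1))}

lemma isClosed_setOf_imp' {α : Type*} [TopologicalSpace α] {P : Prop} {Q : α → Prop}
    (h : IsClosed {a | Q a}) : IsClosed {a | P → Q a} := by
  by_cases hp : P
  · simpa [hp] using h
  · simp [hp]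

/-- The set `QI₁(X)` of `1`-Lipschitz quasi-integrals is compact in the topology of
pointwise convergence (the product topology on `ℝ^{C_c(X)}`). -/
theorem isCompact_QI1
    {X : Type*} [TopologicalSpace X] [LocallyCompactSpace X] [T2Space X] :
    IsCompact (QI1 X) := by

  -- closedness
  have hA : IsClosed {η : Ccs X → ℝ | ∀ f : Ccs X, (∀ x, 0 ≤ f.1 x) → 0 ≤ η f} := by
    simp only [Set.setOf_forall]
    exact isClosed_iInter fun f => isClosed_iInter fun _ =>
      isClosed_le continuous_const (continuous_apply f)
  have hB : IsClosed {η : Ccs X → ℝ | ∀ f g h s : Ccs X, g.1 ∈ Cf f.1 → h.1 ∈ Cf f.1 →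
      s.1 = g.1 + h.1 → η s = η g + η h} := by
    simp only [Set.setOf_forall]
    refine isClosed_iInter fun f => isClosed_iInter fun g => isClosed_iInter fun h =>
      isClosed_iInter fun s => ?_
    exact isClosed_iInter fun _ => isClosed_iInter fun _ => isClosed_iInter fun _ =>
      isClosed_eq (continuous_apply s) ((continuous_apply g).add (continuous_apply h))
  have hC : IsClosed {η : Ccs X → ℝ | ∀ (c : ℝ) (f g s : Ccs X), g.1 ∈ Cf f.1 →
      s.1 = c • g.1 → η s = c * η g} := by
    simp only [Set.setOf_forall]
    refine isClosed_iInter fun c => isClosed_iInter fun f => isClosed_iInter fun g =>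
      isClosed_iInter fun s => ?_
    exact isClosed_iInter fun _ => isClosed_iInter fun _ =>
      isClosed_eq (continuous_apply s) (continuous_const.mul (continuous_apply g))
  have hD : IsClosed {η : Ccs X → ℝ | ∀ f g : Ccs X, |η f - η g| ≤ unif (f.1 - g.1)} := by
    simp only [Set.setOf_forall]
    refine isClosed_iInter fun f => isClosed_iInter fun g => ?_
    exact isClosed_le ((continuous_apply f).sub (continuous_apply g)).abs continuous_const
  have hclosed : IsClosed (QI1 X) := hA.inter (hB.inter (hC.inter hD))
  -- bounded in each coordinate
  have hsub : QI1 X ⊆ Set.pi Set.univ (fun f => Set.Icc (-(unif f.1)) (unif f.1)) := by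
    rintro η ⟨h1, h2, h3, h4⟩ f -
    set z : Ccs X := ⟨0, continuous_const, HasCompactSupport.zero⟩ with hzdef
    have hz : η z = 0 := by
      have := h3 0 z z z ⟨id, continuous_id, rfl, rfl⟩ (by simp [hzdef])
      simpa using this
    have hb := h4 f z
    rw [hz, sub_zero] at hb
    have : |η f| ≤ unif f.1 := by simpa [hzdef, sub_zero] using hb
    exact abs_le.mp this
  exact IsCompact.of_isClosed_subset (isCompact_univ_pi fun f => isCompact_Icc) hclosed hsub
end

section
/- Let X be a locally compact Hausdorff topological space. For each f ∈ C_c(X) let B₁(f)₊ denote the set of positive ℝ-linear functionals on C(f) of norm at most 1, equipped with the topology of pointwise convergence (weak-* topology). Then the map ι : QI₁(X) → ∏_{f ∈ C_c(X)} B₁(f)₊ sending a 1-Lipschitz quasi-integral η to the family of its restrictions (η|_{C(f)})_{f ∈ C_c(X)} is injective, and it is a homeomorphism onto its image, which is a closed subset of the product ∏_{f ∈ C_c(X)} B₁(f)₊ with the product topology. -/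
lemma isCc_of_mem_Cf {X : Type*} [TopologicalSpace X] {f g : X → ℝ}
    (hf : IsCc f) (hg : g ∈ Cf f) : IsCc g := by
  obtain ⟨φ, hφc, hφ0, rfl⟩ := hg
  exact ⟨hφc.comp hf.1, hf.2.comp_left hφ0⟩

/-- The subalgebra `C(f) ⊆ C_c(X)`, as a type. -/
def CfS {X : Type*} [TopologicalSpace X] (f : Ccs X) : Type _ :=
  {g : X → ℝ // g ∈ Cf f.1}

/-- The map `ι` sending a functional `η : C_c(X) → ℝ` to the family of its restrictions
`(η|_{C(f)})_{f ∈ C_c(X)}`. -/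
def iota {X : Type*} [TopologicalSpace X] (η : Ccs X → ℝ) :
    ∀ f : Ccs X, (CfS f → ℝ) :=
  fun f h => η ⟨h.1, isCc_of_mem_Cf f.2 h.2⟩

/-- The product `∏_{f ∈ C_c(X)} B₁(f)₊` of the sets of positive linear functionals of
norm at most `1` on the subalgebras `C(f)`. -/
def Bpos (X : Type*) [TopologicalSpace X] : Set (∀ f : Ccs X, (CfS f → ℝ)) :=
  {ρ | ∀ f : Ccs X,
    (∀ h : CfS f, (∀ x, 0 ≤ h.1 x) → 0 ≤ ρ f h) ∧
    (∀ g h s : CfS f, s.1 = g.1 + h.1 → ρ f s = ρ f g + ρ f h) ∧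
    (∀ (c : ℝ) (g s : CfS f), s.1 = c • g.1 → ρ f s = c * ρ f g) ∧
    (∀ h : CfS f, |ρ f h| ≤ unif h.1)}


lemma mem_Cf_self {X : Type*} (f : X → ℝ) : f ∈ Cf f :=
  ⟨id, continuous_id, rfl, rfl⟩

lemma mem_Cf_add {X : Type*} {f g h : X → ℝ} (hg : g ∈ Cf f) (hh : h ∈ Cf f) :
    g + h ∈ Cf f := by
  obtain ⟨φ, hφc, hφ0, rfl⟩ := hg
  obtain ⟨ψ, hψc, hψ0, rfl⟩ := hh
  exact ⟨φ + ψ, hφc.add hψc, by simp [hφ0, hψ0], rfl⟩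

lemma mem_Cf_smul {X : Type*} (c : ℝ) {f g : X → ℝ} (hg : g ∈ Cf f) :
    c • g ∈ Cf f := by
  obtain ⟨φ, hφc, hφ0, rfl⟩ := hg
  exact ⟨c • φ, hφc.const_smul c, by simp [hφ0], rfl⟩

lemma isCc_zero {X : Type*} [TopologicalSpace X] : IsCc (0 : X → ℝ) :=
  ⟨continuous_const, HasCompactSupport.zero⟩

lemma eta_zero {X : Type*} [TopologicalSpace X] {η : Ccs X → ℝ} (hη : η ∈ QI1 X) :
    η ⟨0, isCc_zero⟩ = 0 := by
  have := hη.2.2.1 0 ⟨0, isCc_zero⟩ ⟨0, isCc_zero⟩ ⟨0, isCc_zero⟩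
      (mem_Cf_self _) (by funext x; simp)
  simpa using this

/-- The closed "compatibility + Lipschitz" conditions. -/
def Scl (X : Type*) [TopologicalSpace X] : Set (∀ f : Ccs X, CfS f → ℝ) :=
  {ρ | (∀ (f : Ccs X) (h : CfS f),
          ρ f h = ρ ⟨h.1, isCc_of_mem_Cf f.2 h.2⟩ ⟨h.1, mem_Cf_self h.1⟩) ∧
       (∀ f g : Ccs X,
          |ρ f ⟨f.1, mem_Cf_self f.1⟩ - ρ g ⟨g.1, mem_Cf_self g.1⟩| ≤ unif (f.1 - g.1))}

lemma isClosed_Scl (X : Type*) [TopologicalSpace X] : IsClosed (Scl X) := by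
  have h1 : IsClosed {ρ : ∀ f : Ccs X, CfS f → ℝ | ∀ (f : Ccs X) (h : CfS f),
      ρ f h = ρ ⟨h.1, isCc_of_mem_Cf f.2 h.2⟩ ⟨h.1, mem_Cf_self h.1⟩} := by
    have heq : {ρ : ∀ f : Ccs X, CfS f → ℝ | ∀ (f : Ccs X) (h : CfS f),
        ρ f h = ρ ⟨h.1, isCc_of_mem_Cf f.2 h.2⟩ ⟨h.1, mem_Cf_self h.1⟩}
        = ⋂ (f : Ccs X), ⋂ (h : CfS f), {ρ : ∀ f : Ccs X, CfS f → ℝ |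
            ρ f h = ρ ⟨h.1, isCc_of_mem_Cf f.2 h.2⟩ ⟨h.1, mem_Cf_self h.1⟩} := by
      ext ρ; simp [Set.mem_iInter]
    rw [heq]
    exact isClosed_iInter fun f => isClosed_iInter fun h =>
      isClosed_eq ((continuous_apply h).comp (continuous_apply f))
        ((continuous_apply _).comp (continuous_apply _))
  have h2 : IsClosed {ρ : ∀ f : Ccs X, CfS f → ℝ | ∀ f g : Ccs X,
      |ρ f ⟨f.1, mem_Cf_self f.1⟩ - ρ g ⟨g.1, mem_Cf_self g.1⟩| ≤ unif (f.1 - g.1)} := by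
    have heq : {ρ : ∀ f : Ccs X, CfS f → ℝ | ∀ f g : Ccs X,
        |ρ f ⟨f.1, mem_Cf_self f.1⟩ - ρ g ⟨g.1, mem_Cf_self g.1⟩| ≤ unif (f.1 - g.1)}
        = ⋂ (f : Ccs X), ⋂ (g : Ccs X), {ρ : ∀ f : Ccs X, CfS f → ℝ |
            |ρ f ⟨f.1, mem_Cf_self f.1⟩ - ρ g ⟨g.1, mem_Cf_self g.1⟩| ≤ unif (f.1 - g.1)} := by
      ext ρ; simp [Set.mem_iInter]
    rw [heq]
    refine isClosed_iInter fun f => isClosed_iInter fun g =>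
      isClosed_le ?_ continuous_const
    have c1 : Continuous fun ρ : ∀ f : Ccs X, CfS f → ℝ => ρ f ⟨f.1, mem_Cf_self f.1⟩ :=
      (continuous_apply _).comp (continuous_apply f)
    have c2 : Continuous fun ρ : ∀ f : Ccs X, CfS f → ℝ => ρ g ⟨g.1, mem_Cf_self g.1⟩ :=
      (continuous_apply _).comp (continuous_apply g)
    exact (c1.sub c2).abs
  exact h1.inter h2

/-- The map `ι : QI₁(X) → ∏_{f ∈ C_c(X)} B₁(f)₊`, `η ↦ (η|_{C(f)})_f`, is injective, a
homeomorphism onto its image (all spaces carrying the topology of pointwise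
convergence), and its image is a closed subset of `∏_{f ∈ C_c(X)} B₁(f)₊`. -/
theorem iota_closed_embedding
    {X : Type*} [TopologicalSpace X] [LocallyCompactSpace X] [T2Space X] :
    Set.InjOn (iota (X := X)) (QI1 X) ∧
    iota (X := X) '' QI1 X ⊆ Bpos X ∧
    Topology.IsEmbedding (fun η : QI1 X => iota η.1) ∧
    IsClosed {p : Bpos X | p.1 ∈ iota (X := X) '' QI1 X} := by
  have hinj : Set.InjOn (iota (X := X)) (QI1 X) := by
    intro η1 _ η2 _ h
    funext f
    exact congrFun (congrFun h f) ⟨f.1, mem_Cf_self f.1⟩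
  have himg : iota (X := X) '' QI1 X ⊆ Bpos X := by
    rintro _ ⟨η, hη, rfl⟩ f
    refine ⟨fun h hpos => hη.1 ⟨h.1, isCc_of_mem_Cf f.2 h.2⟩ hpos,
      fun g h s hs => hη.2.1 f ⟨g.1, isCc_of_mem_Cf f.2 g.2⟩ ⟨h.1, isCc_of_mem_Cf f.2 h.2⟩
        ⟨s.1, isCc_of_mem_Cf f.2 s.2⟩ g.2 h.2 hs,
      fun c g s hs => hη.2.2.1 c f ⟨g.1, isCc_of_mem_Cf f.2 g.2⟩
        ⟨s.1, isCc_of_mem_Cf f.2 s.2⟩ g.2 hs,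
      fun h => ?_⟩
    have := hη.2.2.2 ⟨h.1, isCc_of_mem_Cf f.2 h.2⟩ ⟨0, isCc_zero⟩
    rw [eta_zero hη, sub_zero, sub_zero] at this
    exact this
  refine ⟨hinj, himg, ?_, ?_⟩
  · refine ⟨Topology.IsInducing.of_comp
      (continuous_pi fun f => continuous_pi fun h =>
        (continuous_apply _).comp continuous_subtype_val)
      (continuous_pi fun f : Ccs X =>
        (continuous_apply (⟨f.1, mem_Cf_self f.1⟩ : CfS f)).comp (continuous_apply f))
      (g := fun ρ : ∀ f : Ccs X, CfS f → ℝ => fun f : Ccs X => ρ f ⟨f.1, mem_Cf_self f.1⟩)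
      ?_, ?_⟩
    · have : (fun ρ : ∀ f : Ccs X, CfS f → ℝ => fun f : Ccs X => ρ f ⟨f.1, mem_Cf_self f.1⟩)
          ∘ (fun η : QI1 X => iota η.1) = Subtype.val := rfl
      rw [this]
      exact Topology.IsInducing.subtypeVal
    · intro η1 η2 h
      exact Subtype.ext (hinj η1.2 η2.2 h)
  · have key : {p : Bpos X | p.1 ∈ iota (X := X) '' QI1 X} = Subtype.val ⁻¹' Scl X := by
      ext p
      simp only [Set.mem_setOf_eq, Set.mem_preimage]
      constructor
      · rintro ⟨η, hη, hEq⟩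
        rw [← hEq]
        exact ⟨fun f h => rfl, fun f g => hη.2.2.2 f g⟩
      · intro hS
        refine ⟨fun f => p.1 f ⟨f.1, mem_Cf_self f.1⟩, ⟨?_, ?_, ?_, ?_⟩, ?_⟩
        · intro f hpos
          exact (p.2 f).1 ⟨f.1, mem_Cf_self f.1⟩ hpos
        · intro f g h s hg hh hs
          have hsmem : s.1 ∈ Cf f.1 := hs ▸ mem_Cf_add hg hh
          have e1 : p.1 s ⟨s.1, mem_Cf_self s.1⟩ = p.1 f ⟨s.1, hsmem⟩ :=
            (hS.1 f ⟨s.1, hsmem⟩).symm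
          have e2 : p.1 f (⟨s.1, hsmem⟩ : CfS f) = p.1 f ⟨g.1, hg⟩ + p.1 f ⟨h.1, hh⟩ :=
            (p.2 f).2.1 ⟨g.1, hg⟩ ⟨h.1, hh⟩ ⟨s.1, hsmem⟩ hs
          have e3 : p.1 f (⟨g.1, hg⟩ : CfS f) = p.1 g ⟨g.1, mem_Cf_self g.1⟩ :=
            hS.1 f ⟨g.1, hg⟩
          have e4 : p.1 f (⟨h.1, hh⟩ : CfS f) = p.1 h ⟨h.1, mem_Cf_self h.1⟩ :=
            hS.1 f ⟨h.1, hh⟩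
          show p.1 s ⟨s.1, mem_Cf_self s.1⟩
            = p.1 g ⟨g.1, mem_Cf_self g.1⟩ + p.1 h ⟨h.1, mem_Cf_self h.1⟩
          rw [e1, e2, e3, e4]
        · intro c f g s hg hs
          have hsmem : s.1 ∈ Cf f.1 := hs ▸ mem_Cf_smul c hg
          have e1 : p.1 s ⟨s.1, mem_Cf_self s.1⟩ = p.1 f ⟨s.1, hsmem⟩ :=
            (hS.1 f ⟨s.1, hsmem⟩).symm
          have e2 : p.1 f (⟨s.1, hsmem⟩ : CfS f) = c * p.1 f ⟨g.1, hg⟩ :=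
            (p.2 f).2.2.1 c ⟨g.1, hg⟩ ⟨s.1, hsmem⟩ hs
          have e3 : p.1 f (⟨g.1, hg⟩ : CfS f) = p.1 g ⟨g.1, mem_Cf_self g.1⟩ :=
            hS.1 f ⟨g.1, hg⟩
          show p.1 s ⟨s.1, mem_Cf_self s.1⟩ = c * p.1 g ⟨g.1, mem_Cf_self g.1⟩
          rw [e1, e2, e3]
        · exact hS.2
        · funext f h
          exact (hS.1 f h).symm
    rw [key]
    exact (isClosed_Scl X).preimage continuous_subtype_val
end

section
/- Let W be a smooth, second-countable, finite-dimensional manifold without boundary, and let ζ : C_c(W) → ℝ be a functional that is 1-Lipschitz with respect to the uniform norm. Suppose that for every smooth compactly supported function f : W → ℝ, the restriction of ζ to the set {φ ∘ f | φ : ℝ → ℝ smooth, φ(0) = 0} is ℝ-linear (i.e., additive and homogeneous on this set). Then for every continuous compactly supported f ∈ C_c(W), the restriction of ζ to C(f) = {φ ∘ f | φ : ℝ → ℝ continuous, φ(0) = 0} is ℝ-linear; in particular, if ζ is additionally positive, then ζ is a 1-Lipschitz quasi-integral on W. -/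
open scoped Manifold

/-- A quasi-integral on `X`: a functional on `C_c(X)` which is positive and whose
restriction to `C(f)` is `ℝ`-linear for every `f ∈ C_c(X)`. -/
def IsQuasiIntegral {X : Type*} [TopologicalSpace X] (η : (X → ℝ) → ℝ) : Prop :=
  (∀ f : X → ℝ, IsCc f → (∀ x, 0 ≤ f x) → 0 ≤ η f) ∧
  (∀ f : X → ℝ, IsCc f →
    (∀ g ∈ Cf f, ∀ h ∈ Cf f, η (g + h) = η g + η h) ∧
    (∀ (c : ℝ), ∀ g ∈ Cf f, η (c • g) = c * η g))

/- ### Auxiliary lemmas -/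

lemma unif_le_of_forall {X : Type*} {f : X → ℝ} {ε : ℝ} (hε : 0 ≤ ε)
    (h : ∀ x, |f x| ≤ ε) : unif f ≤ ε := by
  rcases isEmpty_or_nonempty X with hX | hX
  · simpa [unif, Real.iSup_of_isEmpty] using hε
  · exact ciSup_le h

lemma isCc_comp {X : Type*} [TopologicalSpace X] {f : X → ℝ} (hf : IsCc f)
    {φ : ℝ → ℝ} (hφ : Continuous φ) (hφ0 : φ 0 = 0) : IsCc (φ ∘ f) :=
  ⟨hφ.comp hf.1, hf.2.comp_left hφ0⟩

lemma isCc_smul {X : Type*} [TopologicalSpace X] {f : X → ℝ} (hf : IsCc f) (c : ℝ) :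
    IsCc (c • f) :=
  ⟨hf.1.const_smul c,
    IsCompact.of_isClosed_subset hf.2 isClosed_closure
      (closure_mono (Function.support_const_smul_subset c f))⟩

lemma poly_contDiff (p : Polynomial ℝ) : ContDiff ℝ (⊤ : ℕ∞) (fun x => p.eval x) := by
  induction p using Polynomial.induction_on' with
  | add p q hp hq => simpa [Polynomial.eval_add] using hp.add hq
  | monomial n a =>
      simpa [Polynomial.eval_monomial] using
        (contDiff_const (c := a)).mul ((contDiff_id (𝕜 := ℝ)).pow n)

lemma eq_zero_of_forall_abs_le {X : ℝ} (h : ∀ ε > (0:ℝ), |X| ≤ ε) : X = 0 := by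
  have h0 : |X| ≤ 0 := by
    refine le_of_forall_pos_le_add fun ε hε => ?_
    simpa using h ε hε
  exact abs_eq_zero.mp (le_antisymm h0 (abs_nonneg X))

/-- Polynomial (hence smooth) approximation vanishing at `0`. -/
lemma exists_smooth_near {φ : ℝ → ℝ} (hφ : Continuous φ) (hφ0 : φ 0 = 0)
    {B ε : ℝ} (hB : 0 ≤ B) (hε : 0 < ε) :
    ∃ ψ : ℝ → ℝ, ContDiff ℝ (⊤ : ℕ∞) ψ ∧ ψ 0 = 0 ∧ ∀ x ∈ Set.Icc (-B) B, |ψ x - φ x| ≤ ε := by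
  obtain ⟨p, hp⟩ := exists_polynomial_near_of_continuousOn (-B) B φ hφ.continuousOn
    (ε / 2) (by linarith)
  refine ⟨fun x => p.eval x - p.eval 0, (poly_contDiff p).sub contDiff_const, by ring, ?_⟩
  intro x hx
  have h0 : |p.eval 0 - φ 0| < ε / 2 := hp 0 ⟨by linarith, hB⟩
  have hx' : |p.eval x - φ x| < ε / 2 := hp x hx
  rw [hφ0, sub_zero] at h0
  have hrw : p.eval x - p.eval 0 - φ x = (p.eval x - φ x) - p.eval 0 := by ring
  rw [hrw]
  calc |(p.eval x - φ x) - p.eval 0| ≤ |p.eval x - φ x| + |p.eval 0| := abs_sub _ _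
    _ ≤ ε := by linarith

/-- Uniform continuity on a compact interval. -/
lemma exists_delta_unifCont {ψ : ℝ → ℝ} (hψ : Continuous ψ) {a b ε : ℝ} (hε : 0 < ε) :
    ∃ δ > (0:ℝ), ∀ x ∈ Set.Icc a b, ∀ y ∈ Set.Icc a b, |x - y| ≤ δ → |ψ x - ψ y| ≤ ε := by
  have h := (isCompact_Icc (a := a) (b := b)).uniformContinuousOn_of_continuous
    hψ.continuousOn
  rw [Metric.uniformContinuousOn_iff] at h
  obtain ⟨δ, hδ, H⟩ := h ε hε
  refine ⟨δ / 2, by linarith, fun x hx y hy hxy => ?_⟩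
  have := H x hx y hy (by rw [Real.dist_eq]; linarith)
  rw [Real.dist_eq] at this
  linarith

/-- Smooth approximation of a continuous compactly supported function on a manifold. -/
lemma exists_smooth_approx
    {E : Type*} [NormedAddCommGroup E] [NormedSpace ℝ E] [FiniteDimensional ℝ E]
    {W : Type*} [TopologicalSpace W] [T2Space W] [SecondCountableTopology W]
    [ChartedSpace E W] [IsManifold 𝓘(ℝ, E) (⊤ : ℕ∞) W]
    {f : W → ℝ} (hf : IsCc f) {δ : ℝ} (hδ : 0 < δ) :
    ∃ f' : W → ℝ, ContMDiff 𝓘(ℝ, E) 𝓘(ℝ) (⊤ : ℕ∞) f' ∧ HasCompactSupport f' ∧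
      ∀ x, |f' x - f x| ≤ δ := by
  classical
  haveI : LocallyCompactSpace W := Manifold.locallyCompact_of_finiteDimensional 𝓘(ℝ, E)
  obtain ⟨L, hL, hKL, -⟩ := exists_compact_between hf.2 isOpen_univ (Set.subset_univ _)
  set U : Set W := interior L with hU
  have hfU : tsupport f ⊆ U := hKL
  set t : W → Set ℝ := fun x => if x ∈ U then Metric.ball (f x) δ else {0} with ht
  have hconv : ∀ x, Convex ℝ (t x) := by
    intro x
    by_cases hx : x ∈ U
    · simpa [ht, hx] using convex_ball (f x) δ
    · simpa [ht, hx] using convex_singleton (0 : ℝ)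
  have hloc : ∀ x : W, ∃ c : ℝ, ∀ᶠ y in nhds x, c ∈ t y := by
    intro x
    by_cases hx : x ∈ tsupport f
    · refine ⟨f x, ?_⟩
      have hV : U ∩ f ⁻¹' Metric.ball (f x) δ ∈ nhds x :=
        (isOpen_interior.inter (Metric.isOpen_ball.preimage hf.1)).mem_nhds
          ⟨hfU hx, by simp [hδ]⟩
      filter_upwards [hV] with y hy
      simp only [ht, if_pos hy.1]
      rw [Metric.mem_ball, dist_comm]
      simpa [Metric.mem_ball] using hy.2
    · refine ⟨0, ?_⟩
      have hV : (tsupport f)ᶜ ∈ nhds x := (isClosed_tsupport f).isOpen_compl.mem_nhds hx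
      filter_upwards [hV] with y hy
      by_cases hyU : y ∈ U
      · have hfy : f y = 0 := image_eq_zero_of_notMem_tsupport hy
        simp [ht, hyU, hfy, Metric.mem_ball, hδ]
      · simp [ht, hyU]
  obtain ⟨g, hg⟩ := exists_contMDiffMap_forall_mem_convex_of_local_const 𝓘(ℝ, E) (n := (⊤ : ℕ∞)) hconv hloc
  have hsupp : Function.support (⇑g) ⊆ U := by
    intro x hx
    by_contra hxU
    have h0 : g x ∈ t x := hg x
    rw [ht] at h0
    simp only [if_neg hxU, Set.mem_singleton_iff] at h0
    exact hx h0
  have hts : tsupport (⇑g) ⊆ L :=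
    (closure_mono hsupp).trans (closure_minimal interior_subset hL.isClosed)
  refine ⟨⇑g, g.contMDiff, hL.of_isClosed_subset isClosed_closure hts, fun x => ?_⟩
  by_cases hx : x ∈ U
  · have h0 : g x ∈ t x := hg x
    rw [ht] at h0
    simp only [if_pos hx, Metric.mem_ball, Real.dist_eq] at h0
    exact h0.le
  · have h0 : g x ∈ t x := hg x
    rw [ht] at h0
    simp only [if_neg hx, Set.mem_singleton_iff] at h0
    have hfx : f x = 0 := image_eq_zero_of_notMem_tsupport fun h => hx (hfU h)
    simp [h0, hfx, hδ.le]

/-- Joint smooth approximation of `φ ∘ f` and `ψ ∘ f`. -/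
lemma key_approx
    {E : Type*} [NormedAddCommGroup E] [NormedSpace ℝ E] [FiniteDimensional ℝ E]
    {W : Type*} [TopologicalSpace W] [T2Space W] [SecondCountableTopology W]
    [ChartedSpace E W] [IsManifold 𝓘(ℝ, E) (⊤ : ℕ∞) W]
    {f : W → ℝ} (hf : IsCc f) {φ ψ : ℝ → ℝ} (hφ : Continuous φ) (hφ0 : φ 0 = 0)
    (hψ : Continuous ψ) (hψ0 : ψ 0 = 0) {ε : ℝ} (hε : 0 < ε) :
    ∃ (f' : W → ℝ) (φ' ψ' : ℝ → ℝ),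
      ContMDiff 𝓘(ℝ, E) 𝓘(ℝ) (⊤ : ℕ∞) f' ∧ HasCompactSupport f' ∧
      ContDiff ℝ (⊤ : ℕ∞) φ' ∧ φ' 0 = 0 ∧ ContDiff ℝ (⊤ : ℕ∞) ψ' ∧ ψ' 0 = 0 ∧
      (∀ x, |φ' (f' x) - φ (f x)| ≤ ε) ∧ (∀ x, |ψ' (f' x) - ψ (f x)| ≤ ε) := by
  obtain ⟨M, hM⟩ := hf.1.bounded_above_of_compact_support hf.2
  set B : ℝ := max M 0 + 1 with hB
  have hB0 : 0 ≤ B := by positivity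
  have hfB0 : ∀ x, |f x| ≤ max M 0 := fun x =>
    le_trans (by simpa [Real.norm_eq_abs] using hM x) (le_max_left _ _)
  have hfB : ∀ x, f x ∈ Set.Icc (-B) B := by
    intro x
    have h := abs_le.mp (hfB0 x)
    exact ⟨by rw [hB]; linarith [h.1], by rw [hB]; linarith [h.2]⟩
  obtain ⟨φ', hφ'c, hφ'0, hφ'near⟩ := exists_smooth_near hφ hφ0 hB0 (half_pos hε)
  obtain ⟨ψ', hψ'c, hψ'0, hψ'near⟩ := exists_smooth_near hψ hψ0 hB0 (half_pos hε)
  obtain ⟨δ₁, hδ₁, H₁⟩ := exists_delta_unifCont hφ'c.continuous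
    (a := -B) (b := B) (half_pos hε)
  obtain ⟨δ₂, hδ₂, H₂⟩ := exists_delta_unifCont hψ'c.continuous
    (a := -B) (b := B) (half_pos hε)
  set δ : ℝ := min 1 (min δ₁ δ₂) with hδdef
  have hδ0 : 0 < δ := by positivity
  obtain ⟨f', hf'sm, hf'cs, hf'near⟩ := exists_smooth_approx (E := E) hf hδ0
  have hf'B : ∀ x, f' x ∈ Set.Icc (-B) B := by
    intro x
    have h1 := abs_le.mp (hf'near x)
    have h2 := abs_le.mp (hfB0 x)
    have hδ1 : δ ≤ 1 := min_le_left _ _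
    exact ⟨by rw [hB]; linarith [h1.1, h2.1], by rw [hB]; linarith [h1.2, h2.2]⟩
  refine ⟨f', φ', ψ', hf'sm, hf'cs, hφ'c, hφ'0, hψ'c, hψ'0, fun x => ?_, fun x => ?_⟩
  · have hA : |φ' (f' x) - φ' (f x)| ≤ ε / 2 :=
      H₁ (f' x) (hf'B x) (f x) (hfB x)
        (le_trans (hf'near x) (le_trans (min_le_right _ _) (min_le_left _ _)))
    have hBnd : |φ' (f x) - φ (f x)| ≤ ε / 2 := hφ'near (f x) (hfB x)
    calc |φ' (f' x) - φ (f x)|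
        = |(φ' (f' x) - φ' (f x)) + (φ' (f x) - φ (f x))| := by ring_nf
      _ ≤ |φ' (f' x) - φ' (f x)| + |φ' (f x) - φ (f x)| := abs_add_le _ _
      _ ≤ ε := by linarith
  · have hA : |ψ' (f' x) - ψ' (f x)| ≤ ε / 2 :=
      H₂ (f' x) (hf'B x) (f x) (hfB x)
        (le_trans (hf'near x) (le_trans (min_le_right _ _) (min_le_right _ _)))
    have hBnd : |ψ' (f x) - ψ (f x)| ≤ ε / 2 := hψ'near (f x) (hfB x)
    calc |ψ' (f' x) - ψ (f x)|
        = |(ψ' (f' x) - ψ' (f x)) + (ψ' (f x) - ψ (f x))| := by ring_nf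
      _ ≤ |ψ' (f' x) - ψ' (f x)| + |ψ' (f x) - ψ (f x)| := abs_add_le _ _
      _ ≤ ε := by linarith

/-- Let `W` be a smooth second-countable finite-dimensional manifold without boundary and
`ζ : C_c(W) → ℝ` a `1`-Lipschitz functional which is linear on
`{φ ∘ f | φ : ℝ → ℝ smooth, φ 0 = 0}` for every smooth compactly supported `f`. Then `ζ`
is linear on `C(f)` for every continuous compactly supported `f`; in particular, if `ζ`
is additionally positive then `ζ` is a (`1`-Lipschitz) quasi-integral on `W`. -/
theorem quasiLinearity_from_smooth
    {E : Type*} [NormedAddCommGroup E] [NormedSpace ℝ E] [FiniteDimensional ℝ E]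
    {W : Type*} [TopologicalSpace W] [T2Space W] [SecondCountableTopology W]
    [ChartedSpace E W] [IsManifold 𝓘(ℝ, E) (⊤ : ℕ∞) W]
    (ζ : (W → ℝ) → ℝ)
    (hLip : ∀ f g : W → ℝ, IsCc f → IsCc g → |ζ f - ζ g| ≤ unif (f - g))
    (hsmooth : ∀ f : W → ℝ, ContMDiff 𝓘(ℝ, E) 𝓘(ℝ) (⊤ : ℕ∞) f → HasCompactSupport f →
      (∀ φ ψ : ℝ → ℝ, ContDiff ℝ (⊤ : ℕ∞) φ → ContDiff ℝ (⊤ : ℕ∞) ψ → φ 0 = 0 → ψ 0 = 0 →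
        ζ (φ ∘ f + ψ ∘ f) = ζ (φ ∘ f) + ζ (ψ ∘ f)) ∧
      (∀ φ : ℝ → ℝ, ContDiff ℝ (⊤ : ℕ∞) φ → φ 0 = 0 → ∀ c : ℝ,
        ζ (c • (φ ∘ f)) = c * ζ (φ ∘ f))) :
    (∀ f : W → ℝ, IsCc f →
      (∀ g ∈ Cf f, ∀ h ∈ Cf f, ζ (g + h) = ζ g + ζ h) ∧
      (∀ (c : ℝ), ∀ g ∈ Cf f, ζ (c • g) = c * ζ g)) ∧
    ((∀ f : W → ℝ, IsCc f → (∀ x, 0 ≤ f x) → 0 ≤ ζ f) → IsQuasiIntegral ζ) := by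
  have main : ∀ f : W → ℝ, IsCc f →
      (∀ g ∈ Cf f, ∀ h ∈ Cf f, ζ (g + h) = ζ g + ζ h) ∧
      (∀ (c : ℝ), ∀ g ∈ Cf f, ζ (c • g) = c * ζ g) := by
    intro f hf
    constructor
    · rintro g ⟨φ, hφ, hφ0, rfl⟩ h ⟨ψ, hψ, hψ0, rfl⟩
      have hgk : IsCc (φ ∘ f) := isCc_comp hf hφ hφ0
      have hhk : IsCc (ψ ∘ f) := isCc_comp hf hψ hψ0
      have hghk : IsCc (φ ∘ f + ψ ∘ f) := ⟨hgk.1.add hhk.1, hgk.2.add hhk.2⟩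
      have key : ∀ ε > (0:ℝ), |ζ (φ ∘ f + ψ ∘ f) - (ζ (φ ∘ f) + ζ (ψ ∘ f))| ≤ ε := by
        intro ε hε
        have hε4 : 0 < ε / 4 := by linarith
        obtain ⟨f', φ', ψ', hf'sm, hf'cs, hφ'c, hφ'0, hψ'c, hψ'0, hφnear, hψnear⟩ :=
          key_approx (E := E) hf hφ hφ0 hψ hψ0 hε4
        have hf'k : IsCc f' := ⟨hf'sm.continuous, hf'cs⟩
        have hg'k : IsCc (φ' ∘ f') := isCc_comp hf'k hφ'c.continuous hφ'0
        have hh'k : IsCc (ψ' ∘ f') := isCc_comp hf'k hψ'c.continuous hψ'0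
        have hgh'k : IsCc (φ' ∘ f' + ψ' ∘ f') := ⟨hg'k.1.add hh'k.1, hg'k.2.add hh'k.2⟩
        have hlin : ζ (φ' ∘ f' + ψ' ∘ f') = ζ (φ' ∘ f') + ζ (ψ' ∘ f') :=
          (hsmooth f' hf'sm hf'cs).1 φ' ψ' hφ'c hψ'c hφ'0 hψ'0
        have e1 : |ζ (φ ∘ f + ψ ∘ f) - ζ (φ' ∘ f' + ψ' ∘ f')| ≤ ε / 2 := by
          refine le_trans (hLip _ _ hghk hgh'k) (unif_le_of_forall (by linarith) fun x => ?_)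
          have h1 := hφnear x
          have h2 := hψnear x
          simp only [Pi.sub_apply, Pi.add_apply, Function.comp_apply]
          calc |φ (f x) + ψ (f x) - (φ' (f' x) + ψ' (f' x))|
              = |(φ (f x) - φ' (f' x)) + (ψ (f x) - ψ' (f' x))| := by ring_nf
            _ ≤ |φ (f x) - φ' (f' x)| + |ψ (f x) - ψ' (f' x)| := abs_add_le _ _
            _ ≤ ε / 2 := by
                rw [abs_sub_comm (φ (f x)), abs_sub_comm (ψ (f x))]; linarith
        have e2 : |ζ (φ' ∘ f') - ζ (φ ∘ f)| ≤ ε / 4 := by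
          refine le_trans (hLip _ _ hg'k hgk) (unif_le_of_forall hε4.le fun x => ?_)
          simpa [Pi.sub_apply] using hφnear x
        have e3 : |ζ (ψ' ∘ f') - ζ (ψ ∘ f)| ≤ ε / 4 := by
          refine le_trans (hLip _ _ hh'k hhk) (unif_le_of_forall hε4.le fun x => ?_)
          simpa [Pi.sub_apply] using hψnear x
        have hrw : ζ (φ ∘ f + ψ ∘ f) - (ζ (φ ∘ f) + ζ (ψ ∘ f)) =
            (ζ (φ ∘ f + ψ ∘ f) - ζ (φ' ∘ f' + ψ' ∘ f')) +
            (ζ (φ' ∘ f') - ζ (φ ∘ f)) + (ζ (ψ' ∘ f') - ζ (ψ ∘ f)) := by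
          rw [hlin]; ring
        rw [hrw]
        calc |_ + _ + _| ≤ |_ + _| + |ζ (ψ' ∘ f') - ζ (ψ ∘ f)| := abs_add_le _ _
          _ ≤ |ζ (φ ∘ f + ψ ∘ f) - ζ (φ' ∘ f' + ψ' ∘ f')| + |ζ (φ' ∘ f') - ζ (φ ∘ f)|
              + |ζ (ψ' ∘ f') - ζ (ψ ∘ f)| := by gcongr; exact abs_add_le _ _
          _ ≤ ε := by linarith
      have := eq_zero_of_forall_abs_le key
      linarith [this]
    · rintro c g ⟨φ, hφ, hφ0, rfl⟩
      have hgk : IsCc (φ ∘ f) := isCc_comp hf hφ hφ0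
      have hcgk : IsCc (c • (φ ∘ f)) := isCc_smul hgk c
      have key : ∀ ε > (0:ℝ), |ζ (c • (φ ∘ f)) - c * ζ (φ ∘ f)| ≤ ε := by
        intro ε hε
        set ε' : ℝ := ε / (2 * |c| + 1) with hε'def
        have hden : 0 < 2 * |c| + 1 := by positivity
        have hε' : 0 < ε' := by positivity
        obtain ⟨f', φ', ψ', hf'sm, hf'cs, hφ'c, hφ'0, -, -, hφnear, -⟩ :=
          key_approx (E := E) hf hφ hφ0 hφ hφ0 hε'
        have hf'k : IsCc f' := ⟨hf'sm.continuous, hf'cs⟩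
        have hg'k : IsCc (φ' ∘ f') := isCc_comp hf'k hφ'c.continuous hφ'0
        have hcg'k : IsCc (c • (φ' ∘ f')) := isCc_smul hg'k c
        have hlin : ζ (c • (φ' ∘ f')) = c * ζ (φ' ∘ f') :=
          (hsmooth f' hf'sm hf'cs).2 φ' hφ'c hφ'0 c
        have e1 : |ζ (c • (φ ∘ f)) - ζ (c • (φ' ∘ f'))| ≤ |c| * ε' := by
          refine le_trans (hLip _ _ hcgk hcg'k)
            (unif_le_of_forall (by positivity) fun x => ?_)
          have h1 := hφnear x
          simp only [Pi.sub_apply, Pi.smul_apply, Function.comp_apply, smul_eq_mul]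
          rw [← mul_sub, abs_mul]
          have h1' : |φ (f x) - φ' (f' x)| ≤ ε' := by rwa [abs_sub_comm] at h1
          exact mul_le_mul_of_nonneg_left h1' (abs_nonneg c)
        have e2 : |c * ζ (φ' ∘ f') - c * ζ (φ ∘ f)| ≤ |c| * ε' := by
          rw [← mul_sub, abs_mul]
          refine mul_le_mul_of_nonneg_left ?_ (abs_nonneg c)
          refine le_trans (hLip _ _ hg'k hgk) (unif_le_of_forall hε'.le fun x => ?_)
          simpa [Pi.sub_apply] using hφnear x
        have hrw : ζ (c • (φ ∘ f)) - c * ζ (φ ∘ f) =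
            (ζ (c • (φ ∘ f)) - ζ (c • (φ' ∘ f'))) +
            (c * ζ (φ' ∘ f') - c * ζ (φ ∘ f)) := by
          rw [hlin]; ring
        rw [hrw]
        have habs := abs_add_le (ζ (c • (φ ∘ f)) - ζ (c • (φ' ∘ f')))
          (c * ζ (φ' ∘ f') - c * ζ (φ ∘ f))
        have hfinal : 2 * (|c| * ε') ≤ ε := by
          rw [hε'def]
          rw [div_eq_inv_mul]
          have : 2 * (|c| * ((2 * |c| + 1)⁻¹ * ε)) = (2 * |c|) / (2 * |c| + 1) * ε := by
            field_simp
          rw [this]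
          have h1 : (2 * |c|) / (2 * |c| + 1) ≤ 1 := by
            rw [div_le_one hden]; linarith
          nlinarith [hε.le]
        linarith
      have := eq_zero_of_forall_abs_le key
      linarith [this]
  exact ⟨main, fun hpos => ⟨hpos, main⟩⟩
end

section
/- Let n ≥ 1, let U = (0,1)^n ⊂ ℝ^n be the open unit cube, and let σ be a Borel measure on U which is finite on compact subsets of U and which is invariant under all translations preserving U in the following sense: for every Borel set A ⊆ U and every v ∈ ℝ^n such that A + v ⊆ U, one has σ(A + v) = σ(A). Then there exists a constant κ ≥ 0 such that σ(A) = κ · Leb(A) for every Borel set A ⊆ U, where Leb denotes Lebesgue measure on ℝ^n. -/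
/-!
Translation invariance gives all dyadic cubes of a fixed level inside `U` the same `σ`-mass.
The hyperplanes `{x i = c}` are `σ`-null in `U`, since a slice has infinitely many disjoint
translates inside `U` and `σ U < ∞` (`U` is covered by finitely many translates of a box with
compact closure in `U`). Hence `U` is tiled, up to a `σ`-null and Lebesgue-null set, by the
`2 ^ (m n)` level-`m` cubes, which gives `σ Q = σ U * Leb Q` for every dyadic cube `Q ⊆ U`.
Dyadic cubes are nested or disjoint, so together with the measurable subsets of the rational
hyperplanes they form a π-system generating the Borel sets, on which `σ|U` and `σ U • Leb|U` agree.
-/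

open MeasureTheory Set Function

def dyadicInterval (m : ℕ) (k : ℤ) : Set ℝ := Ioo (k / 2 ^ m) ((k + 1) / 2 ^ m)

lemma mem_dyadicInterval {m : ℕ} {k : ℤ} {y : ℝ} :
    y ∈ dyadicInterval m k ↔ k < y * 2 ^ m ∧ y * 2 ^ m < k + 1 := by
  simp only [dyadicInterval, mem_Ioo, div_lt_iff₀ (by positivity : (0 : ℝ) < 2 ^ m),
    lt_div_iff₀ (by positivity : (0 : ℝ) < 2 ^ m)]

lemma index_bounds_of_mem_dyadicInterval {m j : ℕ} {k k' : ℤ} {y : ℝ}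
    (hy : y ∈ dyadicInterval m k) (hy' : y ∈ dyadicInterval (m + j) k') :
    k * 2 ^ j ≤ k' ∧ k' + 1 ≤ (k + 1) * 2 ^ j := by
  rw [mem_dyadicInterval] at hy hy'
  rw [pow_add, ← mul_assoc] at hy'
  have h2j : (0 : ℝ) < 2 ^ j := by positivity
  constructor
  · have : ((k * 2 ^ j : ℤ) : ℝ) < k' + 1 := by push_cast; nlinarith
    exact Int.lt_add_one_iff.mp (by exact_mod_cast this)
  · have : (k' : ℝ) < ((k + 1) * 2 ^ j : ℤ) := by push_cast; nlinarith
    exact_mod_cast this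

lemma dyadicInterval_subset_of_not_disjoint {m j : ℕ} {k k' : ℤ}
    (h : ¬Disjoint (dyadicInterval m k) (dyadicInterval (m + j) k')) :
    dyadicInterval (m + j) k' ⊆ dyadicInterval m k := by
  obtain ⟨y, hy, hy'⟩ := not_disjoint_iff.mp h
  obtain ⟨hlo, hhi⟩ := index_bounds_of_mem_dyadicInterval hy hy'
  have hlo' : (k : ℝ) * 2 ^ j ≤ k' := by exact_mod_cast hlo
  have hhi' : (k' : ℝ) + 1 ≤ (k + 1) * 2 ^ j := by exact_mod_cast hhi
  intro z hz
  rw [mem_dyadicInterval] at hz ⊢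
  rw [pow_add, ← mul_assoc] at hz
  have h2j : (0 : ℝ) < 2 ^ j := by positivity
  constructor <;> nlinarith

lemma pairwise_disjoint_dyadicInterval (m : ℕ) : Pairwise (Disjoint on dyadicInterval m) := by
  intro k k' hne
  by_contra h
  obtain ⟨y, hy, hy'⟩ := not_disjoint_iff.mp h
  have := index_bounds_of_mem_dyadicInterval (j := 0) hy hy'
  simp only [pow_zero, mul_one] at this
  omega

lemma mem_dyadicInterval_floor {y : ℝ} (hy : Irrational y) (m : ℕ) :
    y ∈ dyadicInterval m ⌊y * 2 ^ m⌋ := by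
  have hirr : Irrational (y * 2 ^ m) := by
    simpa using hy.mul_natCast (m := 2 ^ m) (by positivity)
  exact mem_dyadicInterval.mpr
    ⟨(Int.floor_le _).lt_of_ne (hirr.ne_int _).symm, Int.lt_floor_add_one _⟩

lemma dist_lt_of_mem_dyadicInterval {m : ℕ} {k : ℤ} {y z : ℝ} (hy : y ∈ dyadicInterval m k)
    (hz : z ∈ dyadicInterval m k) : dist z y < 1 / 2 ^ m := by
  rw [mem_dyadicInterval] at hy hz
  rw [Real.dist_eq, abs_sub_lt_iff]
  constructor <;> rw [lt_div_iff₀ (by positivity), sub_mul] <;> linarith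

lemma image_add_dyadicInterval (m : ℕ) (k v : ℤ) :
    (· + (v : ℝ) / 2 ^ m) '' dyadicInterval m k = dyadicInterval m (k + v) := by
  rw [dyadicInterval, image_add_const_Ioo, dyadicInterval]
  push_cast
  ring_nf

variable {ι : Type*}

def unitCube (ι : Type*) : Set (ι → ℝ) := univ.pi fun _ => Ioo 0 1

def dyadicCube (m : ℕ) (k : ι → ℤ) : Set (ι → ℝ) := univ.pi fun i => dyadicInterval m (k i)

def rationalHyperplanes (ι : Type*) : Set (ι → ℝ) := ⋃ (i : ι) (q : ℚ), {x | x i = q}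

lemma notMem_rationalHyperplanes {x : ι → ℝ} :
    x ∉ rationalHyperplanes ι ↔ ∀ i, Irrational (x i) := by
  simp [rationalHyperplanes, Irrational, eq_comm]

lemma measurableSet_rationalHyperplanes [Countable ι] :
    MeasurableSet (rationalHyperplanes ι) :=
  .iUnion fun i => .iUnion fun _ => measurableSet_eq_fun (measurable_pi_apply i) measurable_const

lemma measurableSet_unitCube [Countable ι] : MeasurableSet (unitCube ι) :=
  .univ_pi fun _ => measurableSet_Ioo

lemma measurableSet_dyadicCube [Countable ι] (m : ℕ) (k : ι → ℤ) :
    MeasurableSet (dyadicCube m k) :=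
  .univ_pi fun _ => measurableSet_Ioo

lemma dyadicCube_zero_zero : dyadicCube 0 (0 : ι → ℤ) = unitCube ι := by
  simp [dyadicCube, dyadicInterval, unitCube]

lemma dyadicCube_subset_unitCube {m : ℕ} {k : ι → ℤ} (hk : ∀ i, k i ∈ Finset.Ico 0 (2 ^ m)) :
    dyadicCube m k ⊆ unitCube ι := by
  refine pi_mono fun i _ => Ioo_subset_Ioo ?_ ?_
  · have : (0 : ℝ) ≤ k i := by exact_mod_cast (Finset.mem_Ico.mp (hk i)).1
    positivity
  · have : (k i : ℝ) + 1 ≤ 2 ^ m := by exact_mod_cast (Finset.mem_Ico.mp (hk i)).2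
    rwa [div_le_one (by positivity)]

lemma image_add_dyadicCube (m : ℕ) (k v : ι → ℤ) :
    (· + fun i => (v i : ℝ) / 2 ^ m) '' dyadicCube m k = dyadicCube m (k + v) :=
  (piMap_image_univ_pi (fun i => (· + (v i : ℝ) / 2 ^ m)) _).trans
    (pi_congr rfl fun i _ => image_add_dyadicInterval m (k i) (v i))

lemma dyadicCube_subset_or_disjoint {m m' : ℕ} (h : m ≤ m') (k k' : ι → ℤ) :
    dyadicCube m' k' ⊆ dyadicCube m k ∨ Disjoint (dyadicCube m k) (dyadicCube m' k') := by
  obtain ⟨j, rfl⟩ := Nat.exists_eq_add_of_le h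
  by_cases hd : ∃ i, Disjoint (dyadicInterval m (k i)) (dyadicInterval (m + j) (k' i))
  · exact .inr (disjoint_univ_pi.mpr hd)
  · exact .inl (pi_mono fun i _ => dyadicInterval_subset_of_not_disjoint (not_exists.mp hd i))

lemma pairwise_disjoint_dyadicCube (m : ℕ) : Pairwise (Disjoint on dyadicCube (ι := ι) m) := by
  intro k k' hne
  obtain ⟨i, hi⟩ := Function.ne_iff.mp hne
  exact disjoint_univ_pi.mpr ⟨i, pairwise_disjoint_dyadicInterval m hi⟩

lemma mem_dyadicCube_floor {x : ι → ℝ} (hx : x ∉ rationalHyperplanes ι) (m : ℕ) :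
    x ∈ dyadicCube m fun i => ⌊x i * 2 ^ m⌋ :=
  fun i _ => mem_dyadicInterval_floor (notMem_rationalHyperplanes.mp hx i) m

lemma dyadicCube_subset_ball [Fintype ι] {m : ℕ} {k : ι → ℤ} {x : ι → ℝ}
    (hx : x ∈ dyadicCube m k) : dyadicCube m k ⊆ Metric.ball x (1 / 2 ^ m) := fun y hy =>
  (dist_pi_lt_iff (by positivity)).mpr fun i =>
    dist_lt_of_mem_dyadicInterval (hx i (mem_univ i)) (hy i (mem_univ i))

lemma exists_dyadicCube_subset [Fintype ι] {O : Set (ι → ℝ)} (hO : IsOpen O) {x : ι → ℝ}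
    (hxO : x ∈ O) (hx : x ∉ rationalHyperplanes ι) :
    ∃ m k, x ∈ dyadicCube m k ∧ dyadicCube m k ⊆ O := by
  obtain ⟨r, hr, hball⟩ := Metric.isOpen_iff.mp hO x hxO
  obtain ⟨m, hm⟩ := exists_pow_lt_of_lt_one hr (by norm_num : (1 / 2 : ℝ) < 1)
  have hxm := mem_dyadicCube_floor hx m
  refine ⟨m, _, hxm, (dyadicCube_subset_ball hxm).trans ((Metric.ball_subset_ball ?_).trans hball)⟩
  rw [one_div_pow] at hm
  exact hm.le

/-- The open dyadic cubes miss the rational hyperplanes, so the measurable subsets of these are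
added for the family to generate the Borel sets. -/
def dyadicPiSystem (ι : Type*) : Set (Set (ι → ℝ)) :=
  {s | ∃ m k, dyadicCube m k = s} ∪ {s | MeasurableSet s ∧ s ⊆ rationalHyperplanes ι}

lemma measurableSet_of_mem_dyadicPiSystem [Countable ι] {s : Set (ι → ℝ)}
    (hs : s ∈ dyadicPiSystem ι) : MeasurableSet s := by
  rcases hs with ⟨m, k, rfl⟩ | ⟨hs, -⟩
  exacts [measurableSet_dyadicCube m k, hs]

lemma isPiSystem_dyadicPiSystem [Countable ι] : IsPiSystem (dyadicPiSystem ι) := by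
  have cubes : ∀ {m m' : ℕ} (k k' : ι → ℤ), m ≤ m' →
      (dyadicCube m k ∩ dyadicCube m' k').Nonempty →
      dyadicCube m k ∩ dyadicCube m' k' ∈ dyadicPiSystem ι := fun k k' h hne =>
    (dyadicCube_subset_or_disjoint h k k').elim
      (fun hsub => .inl ⟨_, k', (inter_eq_right.mpr hsub).symm⟩)
      (fun hdisj => absurd hdisj (not_disjoint_iff_nonempty_inter.mpr hne))
  rintro s hs t ht hst
  rcases hs with ⟨m, k, rfl⟩ | ⟨hs, hsG⟩
  · rcases ht with ⟨m', k', rfl⟩ | ⟨ht, htG⟩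
    · rcases le_total m m' with h | h
      · exact cubes k k' h hst
      · rw [inter_comm] at hst ⊢
        exact cubes k' k h hst
    · exact .inr ⟨(measurableSet_dyadicCube m k).inter ht, inter_subset_right.trans htG⟩
  · exact .inr ⟨hs.inter (measurableSet_of_mem_dyadicPiSystem ht), inter_subset_left.trans hsG⟩

/-- Off the rational hyperplanes, every open set is the union of the dyadic cubes it contains. -/
lemma generateFrom_dyadicPiSystem [Fintype ι] :
    MeasurableSpace.generateFrom (dyadicPiSystem ι) = MeasurableSpace.pi := by
  refine le_antisymm (MeasurableSpace.generateFrom_le fun s hs =>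
    measurableSet_of_mem_dyadicPiSystem hs) ?_
  rw [BorelSpace.measurable_eq (α := ι → ℝ)]
  refine MeasurableSpace.generateFrom_le fun O (hO : IsOpen O) => ?_
  have hO_eq : O = (O ∩ rationalHyperplanes ι) ∪
      ⋃ (m : ℕ) (k : ι → ℤ) (_ : dyadicCube m k ⊆ O), dyadicCube m k := by
    refine Subset.antisymm (fun x hxO => ?_) (union_subset inter_subset_left
      (iUnion₂_subset fun m k => iUnion_subset id))
    by_cases hx : x ∈ rationalHyperplanes ι
    · exact .inl ⟨hxO, hx⟩
    · obtain ⟨m, k, hxk, hkO⟩ := exists_dyadicCube_subset hO hxO hx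
      exact .inr (mem_iUnion₂.mpr ⟨m, k, mem_iUnion.mpr ⟨hkO, hxk⟩⟩)
  rw [hO_eq]
  refine .union (MeasurableSpace.measurableSet_generateFrom
    (.inr ⟨hO.measurableSet.inter measurableSet_rationalHyperplanes, inter_subset_right⟩)) ?_
  exact .iUnion fun m => .iUnion fun k => .iUnion fun _ =>
    MeasurableSpace.measurableSet_generateFrom (.inl ⟨m, k, rfl⟩)

lemma ext_of_dyadicCube [Fintype ι] {μ ν : Measure (ι → ℝ)} [IsFiniteMeasure μ]
    (hμ : μ (rationalHyperplanes ι) = 0) (hν : ν (rationalHyperplanes ι) = 0)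
    (hcube : ∀ m k, μ (dyadicCube m k) = ν (dyadicCube m k)) (huniv : μ univ = ν univ) :
    μ = ν := by
  refine ext_of_generate_finite _ generateFrom_dyadicPiSystem.symm isPiSystem_dyadicPiSystem
    ?_ huniv
  rintro s (⟨m, k, rfl⟩ | ⟨-, hsG⟩)
  · exact hcube m k
  · rw [measure_mono_null hsG hμ, measure_mono_null hsG hν]

lemma volume_unitCube [Fintype ι] : volume (unitCube ι) = 1 := by
  simp [unitCube, volume_pi_pi, Real.volume_Ioo]

lemma volume_rationalHyperplanes [Fintype ι] : volume (rationalHyperplanes ι) = 0 :=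
  measure_iUnion_null fun i => measure_iUnion_null fun q => by
    rw [volume_pi]
    exact Measure.pi_hyperplane _ i _

lemma measure_unitCube_inter_rationalHyperplanes [Countable ι] {μ : Measure (ι → ℝ)}
    (h : ∀ i (c : ℝ), μ (unitCube ι ∩ {x | x i = c}) = 0) :
    μ (unitCube ι ∩ rationalHyperplanes ι) = 0 := by
  rw [rationalHyperplanes, inter_iUnion₂]
  exact measure_iUnion_null fun i => measure_iUnion_null fun q => h i q

lemma measure_unitCube_eq_sum [Fintype ι] [DecidableEq ι] {μ : Measure (ι → ℝ)}
    (hμ : μ (unitCube ι ∩ rationalHyperplanes ι) = 0) (m : ℕ) :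
    μ (unitCube ι) =
      ∑ k ∈ Fintype.piFinset fun _ => Finset.Ico 0 (2 ^ m), μ (dyadicCube m k) := by
  set S := Fintype.piFinset fun _ : ι => Finset.Ico (0 : ℤ) (2 ^ m)
  have hcover : unitCube ι \ rationalHyperplanes ι ⊆ ⋃ k ∈ S, dyadicCube m k := by
    rintro x ⟨hxU, hx⟩
    refine mem_iUnion₂.mpr ⟨_, Fintype.mem_piFinset.mpr fun i => ?_, mem_dyadicCube_floor hx m⟩
    obtain ⟨hx0, hx1⟩ := hxU i (mem_univ i)
    refine Finset.mem_Ico.mpr ⟨Int.floor_nonneg.mpr (by positivity), Int.floor_lt.mpr ?_⟩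
    push_cast
    nlinarith [pow_pos (two_pos : (0 : ℝ) < 2) m]
  have hsub : (⋃ k ∈ S, dyadicCube m k) ⊆ unitCube ι :=
    iUnion₂_subset fun k hk => dyadicCube_subset_unitCube (Fintype.mem_piFinset.mp hk)
  calc μ (unitCube ι) = μ (⋃ k ∈ S, dyadicCube m k) :=
        le_antisymm ((measure_sdiff_null' hμ).symm.trans_le (measure_mono hcover))
          (measure_mono hsub)
    _ = ∑ k ∈ S, μ (dyadicCube m k) :=
        measure_biUnion_finset (fun _ _ _ _ hne => pairwise_disjoint_dyadicCube m hne)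
          fun k _ => measurableSet_dyadicCube m k

lemma image_add_single_unitCube_inter_subset [DecidableEq ι] (i : ι) {c d : ℝ}
    (hd : d ∈ Ioo 0 1) :
    (· + Pi.single i (d - c)) '' (unitCube ι ∩ {x | x i = c}) ⊆ unitCube ι ∩ {x | x i = d} := by
  rintro _ ⟨x, ⟨hxU, hxc : x i = c⟩, rfl⟩
  refine ⟨fun j _ => ?_, by simp [hxc]⟩
  by_cases hj : j = i
  · subst hj
    simpa [hxc] using hd
  · simpa [hj] using hxU j (mem_univ j)

variable {E : Type*} [MeasurableSpace E]

def IsTranslationInvariantOn [Add E] (μ : Measure E) (U : Set E) : Prop :=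
  ∀ A : Set E, A ⊆ U → MeasurableSet A → ∀ v : E, (fun x => x + v) '' A ⊆ U →
    μ ((fun x => x + v) '' A) = μ A

lemma isTranslationInvariantOn_of_isAddRightInvariant [AddGroup E] [MeasurableAdd E]
    (μ : Measure E) [μ.IsAddRightInvariant] (U : Set E) : IsTranslationInvariantOn μ U :=
  fun A _ _ v _ => by rw [image_add_right, measure_preimage_add_right]

namespace IsTranslationInvariantOn

section

variable [AddGroup E] [MeasurableAdd E] {μ : Measure E} {U : Set E}

lemma measure_eq_zero_of_pairwise_disjoint (hμ : IsTranslationInvariantOn μ U)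
    (hU : μ U ≠ ⊤) {A : Set E} (hAU : A ⊆ U) (hA : MeasurableSet A) (v : ℕ → E)
    (hvU : ∀ j, (· + v j) '' A ⊆ U) (hdisj : Pairwise (Disjoint on fun j => (· + v j) '' A)) :
    μ A = 0 := by
  by_contra hA0
  have hmeas : ∀ j, MeasurableSet ((· + v j) '' A) := fun j => by
    rw [image_add_right]
    exact hA.preimage (measurable_add_const _)
  have hsum : ∑' j, μ ((· + v j) '' A) ≤ μ U :=
    (tsum_meas_le_meas_iUnion_of_disjoint μ hmeas hdisj).trans (measure_mono (iUnion_subset hvU))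
  rw [tsum_congr fun j => hμ A hAU hA (v j) (hvU j), ENNReal.tsum_const_eq_top_of_ne_zero hA0]
    at hsum
  exact hU (top_le_iff.mp hsum)

end

section UnitCube

variable {μ : Measure (ι → ℝ)}

/-- `(0,1)^ι` is covered by the `2 ^ #ι` translates of `(1/8,7/8)^ι` by vectors in `{±1/8}^ι`. -/
lemma measure_unitCube_lt_top [Fintype ι] (hμ : IsTranslationInvariantOn μ (unitCube ι))
    (hfin : ∀ K : Set (ι → ℝ), K ⊆ unitCube ι → IsCompact K → μ K < ⊤) :
    μ (unitCube ι) < ⊤ := by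
  classical
  set B : Set (ι → ℝ) := univ.pi fun _ => Ioo (1 / 8) (7 / 8)
  have hBU : B ⊆ unitCube ι := pi_mono fun _ _ => Ioo_subset_Ioo (by norm_num) (by norm_num)
  set v : (ι → Bool) → ι → ℝ := fun f i => if f i then 1 / 8 else -(1 / 8)
  have hvU : ∀ f, (· + v f) '' B ⊆ unitCube ι := by
    rintro f _ ⟨x, hx, rfl⟩ i -
    obtain ⟨h0, h1⟩ := hx i (mem_univ i)
    simp only [v, Pi.add_apply, mem_Ioo]
    split_ifs <;> constructor <;> linarith
  have hcover : unitCube ι ⊆ ⋃ f, (· + v f) '' B := by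
    intro x hx
    refine mem_iUnion.mpr ⟨fun i => decide (1 / 2 ≤ x i), ?_⟩
    rw [image_add_right]
    intro i _
    obtain ⟨h0, h1⟩ := hx i (mem_univ i)
    simp only [v, Pi.add_apply, Pi.neg_apply, mem_Ioo, decide_eq_true_eq]
    split_ifs <;> constructor <;> linarith
  have hB : μ B < ⊤ :=
    (measure_mono (pi_mono fun _ _ => Ioo_subset_Icc_self)).trans_lt
      (hfin _ (pi_mono fun _ _ => Icc_subset_Ioo (by norm_num) (by norm_num))
        (isCompact_univ_pi fun _ => isCompact_Icc))
  calc μ (unitCube ι) ≤ ∑ f, μ ((· + v f) '' B) :=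
        (measure_mono hcover).trans (measure_iUnion_fintype_le _ _)
    _ = ∑ _f : ι → Bool, μ B := Finset.sum_congr rfl fun f _ =>
        hμ B hBU (.univ_pi fun _ => measurableSet_Ioo) _ (hvU f)
    _ < ⊤ := ENNReal.sum_lt_top.mpr fun _ _ => hB

/-- The slices of the cube at the heights `1 / (j + 2)` are pairwise disjoint translates of each
other, so they cannot have positive measure inside the set `(0,1)^ι` of finite measure. -/
lemma measure_unitCube_inter_hyperplane [Countable ι]
    (hμ : IsTranslationInvariantOn μ (unitCube ι)) (hU : μ (unitCube ι) ≠ ⊤) (i : ι) (c : ℝ) :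
    μ (unitCube ι ∩ {x | x i = c}) = 0 := by
  classical
  by_cases hc : c ∈ Ioo 0 1
  · set d : ℕ → ℝ := fun j => ((j : ℝ) + 2)⁻¹
    have hd : ∀ j, d j ∈ Ioo 0 1 := fun j =>
      ⟨by positivity, inv_lt_one_of_one_lt₀ (by linarith [(j.cast_nonneg : (0 : ℝ) ≤ j)])⟩
    have hd_inj : d.Injective := fun j j' h => by
      simpa using inv_inj.mp h
    refine hμ.measure_eq_zero_of_pairwise_disjoint hU inter_subset_left
      (measurableSet_unitCube.inter (measurableSet_eq_fun (measurable_pi_apply i) measurable_const))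
      (fun j => Pi.single i (d j - c))
      (fun j => (image_add_single_unitCube_inter_subset i (hd j)).trans inter_subset_left)
      fun j j' hne => ?_
    refine Disjoint.mono (image_add_single_unitCube_inter_subset i (hd j))
      (image_add_single_unitCube_inter_subset i (hd j')) ?_
    refine disjoint_left.mpr fun x hx hx' => hne (hd_inj ?_)
    exact hx.2.symm.trans hx'.2
  · convert measure_empty (μ := μ)
    exact eq_empty_of_forall_notMem fun x ⟨hxU, hxc⟩ => hc (hxc ▸ hxU i (mem_univ i))

lemma measure_dyadicCube_eq [Countable ι] (hμ : IsTranslationInvariantOn μ (unitCube ι))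
    {m : ℕ} {k k' : ι → ℤ} (hk : dyadicCube m k ⊆ unitCube ι)
    (hk' : dyadicCube m k' ⊆ unitCube ι) : μ (dyadicCube m k) = μ (dyadicCube m k') := by
  have himage := image_add_dyadicCube m k (k' - k)
  rw [add_sub_cancel] at himage
  rw [← himage, hμ _ hk (measurableSet_dyadicCube m k) _ (himage ▸ hk')]

lemma measure_unitCube_eq_card_mul [Fintype ι] [DecidableEq ι]
    (hμ : IsTranslationInvariantOn μ (unitCube ι))
    (hG : μ (unitCube ι ∩ rationalHyperplanes ι) = 0) {m : ℕ} {k : ι → ℤ}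
    (hk : dyadicCube m k ⊆ unitCube ι) :
    μ (unitCube ι) =
      (Fintype.piFinset fun _ : ι => Finset.Ico (0 : ℤ) (2 ^ m)).card * μ (dyadicCube m k) := by
  rw [measure_unitCube_eq_sum hG m, ← nsmul_eq_mul, ← Finset.sum_const]
  exact Finset.sum_congr rfl fun k' hk' =>
    hμ.measure_dyadicCube_eq (dyadicCube_subset_unitCube (Fintype.mem_piFinset.mp hk')) hk

/-- Compare the tilings of the unit cube by level-`m` dyadic cubes for `μ` and for `volume`. -/
lemma measure_dyadicCube [Fintype ι] (hμ : IsTranslationInvariantOn μ (unitCube ι))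
    (hG : μ (unitCube ι ∩ rationalHyperplanes ι) = 0) {m : ℕ} {k : ι → ℤ}
    (hk : dyadicCube m k ⊆ unitCube ι) :
    μ (dyadicCube m k) = μ (unitCube ι) * volume (dyadicCube m k) := by
  classical
  have hvol := (isTranslationInvariantOn_of_isAddRightInvariant volume (unitCube ι))
    |>.measure_unitCube_eq_card_mul
      (measure_mono_null inter_subset_right volume_rationalHyperplanes) hk
  rw [volume_unitCube] at hvol
  set N : ENNReal := ((Fintype.piFinset fun _ : ι => Finset.Ico (0 : ℤ) (2 ^ m)).card : ENNReal)
  calc μ (dyadicCube m k) = μ (dyadicCube m k) * (N * volume (dyadicCube m k)) := by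
        rw [← hvol, mul_one]
    _ = (N * μ (dyadicCube m k)) * volume (dyadicCube m k) := by ring
    _ = μ (unitCube ι) * volume (dyadicCube m k) := by rw [← hμ.measure_unitCube_eq_card_mul hG hk]

lemma restrict_unitCube_eq_smul_volume [Fintype ι]
    (hμ : IsTranslationInvariantOn μ (unitCube ι)) (hU : μ (unitCube ι) ≠ ⊤)
    (hG : μ (unitCube ι ∩ rationalHyperplanes ι) = 0) :
    μ.restrict (unitCube ι) = μ (unitCube ι) • volume.restrict (unitCube ι) := by
  have : IsFiniteMeasure (μ.restrict (unitCube ι)) := isFiniteMeasure_restrict.mpr hU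
  refine ext_of_dyadicCube ?_ ?_ (fun m k => ?_) ?_
  · rwa [Measure.restrict_apply measurableSet_rationalHyperplanes, inter_comm]
  · rw [Measure.smul_apply, Measure.restrict_apply measurableSet_rationalHyperplanes,
      measure_mono_null inter_subset_left volume_rationalHyperplanes, smul_zero]
  · rcases dyadicCube_subset_or_disjoint m.zero_le 0 k with hk | hk <;>
      rw [dyadicCube_zero_zero] at hk
    · rw [Measure.smul_apply, Measure.restrict_eq_self _ hk, Measure.restrict_eq_self _ hk,
        smul_eq_mul, hμ.measure_dyadicCube hG hk]
    · rw [Measure.smul_apply, Measure.restrict_apply (measurableSet_dyadicCube m k),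
        Measure.restrict_apply (measurableSet_dyadicCube m k), hk.symm.inter_eq, measure_empty,
        measure_empty, smul_zero]
  · rw [Measure.smul_apply, Measure.restrict_apply_univ, Measure.restrict_apply_univ,
      volume_unitCube, smul_eq_mul, mul_one]

end UnitCube

end IsTranslationInvariantOn

theorem translation_invariant_measure_on_cube_general
    (n : ℕ)
    (U : Set (Fin n → ℝ)) (hU : U = Set.pi Set.univ fun _ => Set.Ioo (0 : ℝ) 1)
    (σ : Measure (Fin n → ℝ))
    (hfin : ∀ K : Set (Fin n → ℝ), K ⊆ U → IsCompact K → σ K < ⊤)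
    (hinv : ∀ A : Set (Fin n → ℝ), A ⊆ U → MeasurableSet A →
      ∀ v : Fin n → ℝ, (fun x => x + v) '' A ⊆ U →
        σ ((fun x => x + v) '' A) = σ A) :
    ∃ κ : NNReal, ∀ A : Set (Fin n → ℝ), A ⊆ U → MeasurableSet A →
      σ A = (κ : ENNReal) * volume A := by
  obtain rfl : U = unitCube (Fin n) := hU
  have hinv : IsTranslationInvariantOn σ (unitCube (Fin n)) := hinv
  have hσU := hinv.measure_unitCube_lt_top hfin
  have hG := measure_unitCube_inter_rationalHyperplanes
    (hinv.measure_unitCube_inter_hyperplane hσU.ne)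
  have hrestrict := hinv.restrict_unitCube_eq_smul_volume hσU.ne hG
  refine ⟨(σ (unitCube (Fin n))).toNNReal, fun A hAU _ => ?_⟩
  rw [ENNReal.coe_toNNReal hσU.ne, ← Measure.restrict_eq_self σ hAU, hrestrict,
    Measure.smul_apply, Measure.restrict_eq_self _ hAU, smul_eq_mul]

/-- Let `U = (0,1)^n` be the open unit cube in `ℝ^n` (`n ≥ 1`) and let `σ` be a Borel
measure which is finite on compact subsets of `U` and invariant under all translations
preserving `U`: `σ(A + v) = σ(A)` whenever `A ⊆ U` is Borel and `A + v ⊆ U`. Then there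
is `κ ≥ 0` with `σ(A) = κ · Leb(A)` for every Borel `A ⊆ U`. -/
theorem translation_invariant_measure_on_cube
    (n : ℕ) (hn : 1 ≤ n)
    (U : Set (Fin n → ℝ)) (hU : U = Set.pi Set.univ fun _ => Set.Ioo (0 : ℝ) 1)
    (σ : Measure (Fin n → ℝ))
    (hfin : ∀ K : Set (Fin n → ℝ), K ⊆ U → IsCompact K → σ K < ⊤)
    (hinv : ∀ A : Set (Fin n → ℝ), A ⊆ U → MeasurableSet A →
      ∀ v : Fin n → ℝ, (fun x => x + v) '' A ⊆ U →
        σ ((fun x => x + v) '' A) = σ A) :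
    ∃ κ : NNReal, ∀ A : Set (Fin n → ℝ), A ⊆ U → MeasurableSet A →
      σ A = (κ : ENNReal) * volume A :=
  translation_invariant_measure_on_cube_general n U hU σ hfin hinv
end
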